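/- arXiv:1003.2352 — 5 statements merged into one kernel-verified Lean document; each statement's English description precedes it below -/
import Mathlib

section
/- Let A be a subset of an abelian group Z. The following are equivalent: (i) 0 ∈ A and A − 2A ⊆ A; (ii) 0 ∈ A and 2A − A ⊆ A; (iii) 2·ℤ[A] ⊆ A and 2·ℤ[A] − A ⊆ A, where ℤ[A] is the subgroup generated by A; (iv) A is a union of cosets modulo 2·ℤ[A], including the trivial coset 2·ℤ[A]. Moreover, any such 'pointed reflection subspace' A is symmetric: A = −A. -/
/-!
Both reflection conditions force `A = -A` (reflect `a` in itself, resp. in `0`), and for a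
symmetric set they are exchanged by negating both arguments. The substance is (i) ⇒ (iv):
the elements `x` with `A + 2x ⊆ A` form a subgroup, since `A - 2x = -(-A + 2x)`, and it contains
`A` because `a + 2a₂ = a - 2(-a₂)`; hence it contains `ℤ[A]`.
-/

section

variable {Z : Type*} [AddCommGroup Z] {A : Set Z}

theorem neg_mem_of_sub_two_nsmul_mem (h : ∀ a₁ ∈ A, ∀ a₂ ∈ A, a₁ - 2 • a₂ ∈ A) {a : Z}
    (ha : a ∈ A) : -a ∈ A := by
  simpa [two_nsmul] using h a ha a ha

theorem neg_mem_of_two_nsmul_sub_mem (h0 : (0 : Z) ∈ A)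
    (h : ∀ a₁ ∈ A, ∀ a₂ ∈ A, 2 • a₁ - a₂ ∈ A) {a : Z} (ha : a ∈ A) : -a ∈ A := by
  simpa using h 0 h0 a ha

theorem sub_two_nsmul_mem_of_two_nsmul_sub_mem (hneg : ∀ a ∈ A, -a ∈ A)
    (h : ∀ a₁ ∈ A, ∀ a₂ ∈ A, 2 • a₁ - a₂ ∈ A) {a₁ a₂ : Z} (h₁ : a₁ ∈ A) (h₂ : a₂ ∈ A) :
    a₁ - 2 • a₂ ∈ A := by
  simpa [sub_eq_add_neg, add_comm] using h _ (hneg a₂ h₂) _ (hneg a₁ h₁)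

theorem add_two_nsmul_mem_of_mem_closure (h : ∀ a₁ ∈ A, ∀ a₂ ∈ A, a₁ - 2 • a₂ ∈ A) {x : Z}
    (hx : x ∈ AddSubgroup.closure A) : ∀ a ∈ A, a + 2 • x ∈ A := by
  have hneg : ∀ a ∈ A, -a ∈ A := fun a ha => neg_mem_of_sub_two_nsmul_mem h ha
  induction hx using AddSubgroup.closure_induction with
  | mem y hy =>
    intro a ha
    simpa [sub_eq_add_neg] using h a ha (-y) (hneg y hy)
  | zero => simp
  | add x y _ _ hx hy =>
    intro a ha
    simpa [nsmul_add, add_assoc] using hy _ (hx a ha)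
  | neg x _ hx =>
    intro a ha
    simpa [sub_eq_add_neg, add_comm] using hneg _ (hx _ (hneg a ha))

theorem eq_neg_of_neg_mem (hneg : ∀ a ∈ A, -a ∈ A) : A = -A :=
  Set.Subset.antisymm (fun a ha => Set.mem_neg.mpr (hneg a ha))
    fun a ha => by simpa using hneg _ (Set.mem_neg.mp ha)

end

/-- Characterizations of pointed reflection subspaces of an abelian group, and their
symmetry. Here `ℤ[A]` is the subgroup generated by `A`. -/
theorem pointed_reflection_subspace_tfae (Z : Type*) [AddCommGroup Z] (A : Set Z) :
    List.TFAE
      [ -- (i) 0 ∈ A and A − 2A ⊆ A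
        ((0 : Z) ∈ A ∧ ∀ a₁ ∈ A, ∀ a₂ ∈ A, a₁ - 2 • a₂ ∈ A),
        -- (ii) 0 ∈ A and 2A − A ⊆ A
        ((0 : Z) ∈ A ∧ ∀ a₁ ∈ A, ∀ a₂ ∈ A, 2 • a₁ - a₂ ∈ A),
        -- (iii) 2ℤ[A] ⊆ A and 2ℤ[A] − A ⊆ A
        ((∀ x ∈ AddSubgroup.closure A, 2 • x ∈ A) ∧
         (∀ x ∈ AddSubgroup.closure A, ∀ a ∈ A, 2 • x - a ∈ A)),
        -- (iv) A is a union of cosets modulo 2ℤ[A], including the trivial coset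
        ((∀ x ∈ AddSubgroup.closure A, 2 • x ∈ A) ∧
         (∀ a ∈ A, ∀ x ∈ AddSubgroup.closure A, a + 2 • x ∈ A)) ]
    ∧
    -- any pointed reflection subspace is symmetric
    (((0 : Z) ∈ A ∧ ∀ a₁ ∈ A, ∀ a₂ ∈ A, a₁ - 2 • a₂ ∈ A) → A = -A) := by
  refine ⟨?_, fun ⟨_, h⟩ => eq_neg_of_neg_mem fun _ => neg_mem_of_sub_two_nsmul_mem h⟩
  tfae_have 1 → 4 := fun ⟨h0, h⟩ =>
    ⟨fun x hx => by simpa using add_two_nsmul_mem_of_mem_closure h hx 0 h0,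
      fun a ha x hx => add_two_nsmul_mem_of_mem_closure h hx a ha⟩
  tfae_have 4 → 3 := fun ⟨h2, h⟩ => by
    refine ⟨h2, fun x hx a ha => ?_⟩
    have hna : -a ∈ A := by
      simpa [two_nsmul] using h a ha (-a) (neg_mem (AddSubgroup.subset_closure ha))
    simpa [sub_eq_add_neg, add_comm] using h _ hna x hx
  tfae_have 3 → 2 := fun ⟨h2, h⟩ =>
    ⟨by simpa using h2 0 (zero_mem _),
      fun a₁ h₁ a₂ h₂ => h a₁ (AddSubgroup.subset_closure h₁) a₂ h₂⟩
  tfae_have 2 → 1 := fun ⟨h0, h⟩ =>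
    ⟨h0, fun _ h₁ _ h₂ =>
      sub_two_nsmul_mem_of_two_nsmul_sub_mem (fun _ => neg_mem_of_two_nsmul_sub_mem h0 h) h h₁ h₂⟩
  tfae_finish
end

section
/- Let A be a subset of an abelian group Z, and let Λ = ℤ[A] be the subgroup generated by A. The following are equivalent: (i) 2A − A ⊆ A and A = −A; (ii) 2λ + a ∈ A for every λ ∈ Λ and a ∈ A; (iii) A is a union of cosets modulo 2Λ; (iv) a₁ − 2a₂ ∈ A for all a₁,a₂ ∈ A. -/
/-! All four conditions say that `A` is symmetric and stable under `a ↦ a + 2b` for `b ∈ A`: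
since `a₁ - 2a₂ = a₁ + 2(-a₂)` and `2a₁ - a₂ = a₂ + 2(a₁ - a₂)`, the only real step is that
stability under `2b` for the generators `b ∈ A` propagates to all of `Λ`, because the set of
`λ` with `2λ + A ⊆ A` is a subgroup once `A = -A`. -/

namespace Set

variable {Z : Type*} [AddCommGroup Z] {A : Set Z}

theorem neg_mem_of_forall_sub_two_nsmul_mem (h : ∀ a₁ ∈ A, ∀ a₂ ∈ A, a₁ - 2 • a₂ ∈ A)
    {a : Z} (ha : a ∈ A) : -a ∈ A := by
  simpa [two_nsmul] using h a ha a ha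

theorem neg_eq_self_of_forall_neg_mem (h : ∀ a ∈ A, -a ∈ A) : -A = A :=
  neg_eq_self_iff_neg_subset.2 fun a ha => by simpa using h (-a) ha

theorem two_nsmul_add_mem_of_mem_closure (hneg : ∀ a ∈ A, -a ∈ A)
    (hgen : ∀ b ∈ A, ∀ a ∈ A, 2 • b + a ∈ A) {lam : Z} (hlam : lam ∈ AddSubgroup.closure A) :
    ∀ a ∈ A, 2 • lam + a ∈ A := by
  induction hlam using AddSubgroup.closure_induction with
  | mem b hb => exact hgen b hb
  | zero => simp
  | add x y _ _ hx hy =>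
    intro a ha
    simpa [nsmul_add, add_assoc] using hx _ (hy a ha)
  | neg x _ hx =>
    intro a ha
    have h := hneg _ (hx (-a) (hneg a ha))
    rwa [neg_add, neg_neg, ← smul_neg] at h

end Set

theorem symmetric_reflection_subspace_tfae_general (Z : Type*) [AddCommGroup Z] (A : Set Z) :
    List.TFAE
      [ -- (i)
        ((∀ a₁ ∈ A, ∀ a₂ ∈ A, 2 • a₁ - a₂ ∈ A) ∧ A = -A),
        -- (ii)
        (∀ lam ∈ AddSubgroup.closure A, ∀ a ∈ A, 2 • lam + a ∈ A),
        -- (iii) A is a union of cosets modulo 2Λ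
        (∀ a ∈ A, ∀ lam ∈ AddSubgroup.closure A, a + 2 • lam ∈ A),
        -- (iv)
        (∀ a₁ ∈ A, ∀ a₂ ∈ A, a₁ - 2 • a₂ ∈ A) ] := by
  tfae_have 1 → 4 := by
    rintro ⟨h, hsym⟩ a₁ h₁ a₂ h₂
    have hneg : ∀ a ∈ A, -a ∈ A := fun a ha => by rw [hsym]; simpa using ha
    simpa [sub_eq_add_neg, add_comm] using h _ (hneg a₂ h₂) _ (hneg a₁ h₁)
  tfae_have 4 → 2 := by
    intro h4 lam hlam
    have hneg := fun a (ha : a ∈ A) => Set.neg_mem_of_forall_sub_two_nsmul_mem h4 ha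
    refine Set.two_nsmul_add_mem_of_mem_closure hneg (fun b hb a ha => ?_) hlam
    simpa [sub_eq_add_neg, add_comm] using h4 a ha (-b) (hneg b hb)
  tfae_have 2 → 3 := fun h a ha lam hlam => add_comm (2 • lam) a ▸ h lam hlam a ha
  tfae_have 3 → 1 := by
    intro h3
    have hmem {a} (ha : a ∈ A) : a ∈ AddSubgroup.closure A := AddSubgroup.subset_closure ha
    have hneg : ∀ a ∈ A, -a ∈ A := fun a ha => by
      simpa [two_nsmul] using h3 a ha (-a) (neg_mem (hmem ha))
    refine ⟨fun a₁ h₁ a₂ h₂ => ?_, (Set.neg_eq_self_of_forall_neg_mem hneg).symm⟩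
    have h := h3 a₂ h₂ _ (sub_mem (hmem h₁) (hmem h₂))
    rwa [show a₂ + 2 • (a₁ - a₂) = 2 • a₁ - a₂ by abel] at h
  tfae_finish

/-- Characterizations of symmetric reflection subspaces: for a nonempty subset `A` of an
abelian group `Z` with `Λ = ℤ[A]` the subgroup generated by `A`, TFAE:
(i) `2A − A ⊆ A` and `A = −A`; (ii) `2λ + a ∈ A` for all `λ ∈ Λ`, `a ∈ A`;
(iii) `A` is a union of cosets modulo `2Λ`; (iv) `a₁ − 2a₂ ∈ A` for all `a₁, a₂ ∈ A`. -/
theorem symmetric_reflection_subspace_tfae (Z : Type*) [AddCommGroup Z] (A : Set Z)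
    (hne : A.Nonempty) :
    List.TFAE
      [ -- (i)
        ((∀ a₁ ∈ A, ∀ a₂ ∈ A, 2 • a₁ - a₂ ∈ A) ∧ A = -A),
        -- (ii)
        (∀ lam ∈ AddSubgroup.closure A, ∀ a ∈ A, 2 • lam + a ∈ A),
        -- (iii) A is a union of cosets modulo 2Λ
        (∀ a ∈ A, ∀ lam ∈ AddSubgroup.closure A, a + 2 • lam ∈ A),
        -- (iv)
        (∀ a₁ ∈ A, ∀ a₂ ∈ A, a₁ - 2 • a₂ ∈ A) ] :=
  symmetric_reflection_subspace_tfae_general Z A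
end

section
/- Let E be a Lie algebra with an invariant nondegenerate symmetric bilinear form (·|·), and let K be an ideal of E with K = [E,K]. Then {z ∈ K : (z | K) = 0} = Z(K), the centre of K. -/
section InvariantForm

variable {R E : Type*} [CommRing R] [LieRing E] [LieAlgebra R E] (B : E →ₗ[R] E →ₗ[R] R)

/-- Invariance moves the bracket across: `(⁅z, k⁆ | e) = (z | ⁅k, e⁆)` with `⁅k, e⁆ ∈ K`. -/
theorem lie_eq_zero_of_forall_form_eq_zero (hinv : ∀ a b c : E, B ⁅a, b⁆ c = B a ⁅b, c⁆)
    (hnondeg : ∀ a : E, (∀ b : E, B a b = 0) → a = 0) {K : LieIdeal R E} {z : E}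
    (hz : ∀ k ∈ K, B z k = 0) {k : E} (hk : k ∈ K) : ⁅z, k⁆ = 0 :=
  hnondeg _ fun e => by rw [hinv]; exact hz _ (lie_mem_left R E K k e hk)

/-- On generators, `(z | ⁅x, n⁆) = (x | ⁅n, z⁆) = 0`. -/
theorem form_eq_zero_of_mem_lie_top (hsymm : ∀ a b : E, B a b = B b a)
    (hinv : ∀ a b c : E, B ⁅a, b⁆ c = B a ⁅b, c⁆) {K : LieIdeal R E} {z : E}
    (hz : ∀ n ∈ K, ⁅z, n⁆ = 0) {k : E} (hk : k ∈ ⁅(⊤ : LieIdeal R E), K⁆) : B z k = 0 := by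
  rw [← LieSubmodule.mem_toSubmodule, LieSubmodule.lieIdeal_oper_eq_linear_span'] at hk
  suffices h : Submodule.span R {m | ∃ x ∈ (⊤ : LieIdeal R E), ∃ n ∈ K, ⁅x, n⁆ = m} ≤
      LinearMap.ker (B z) from h hk
  rw [Submodule.span_le]
  rintro _ ⟨x, -, n, hn, rfl⟩
  rw [SetLike.mem_coe, LinearMap.mem_ker, hsymm, hinv, ← lie_skew, hz n hn, neg_zero, map_zero]

end InvariantForm

theorem radical_restricted_form_eq_center_general (F : Type*) [Field F]
    (E : Type*) [LieRing E] [LieAlgebra F E]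
    (B : E →ₗ[F] E →ₗ[F] F)
    (hsymm : ∀ a b : E, B a b = B b a)
    (hinv : ∀ a b c : E, B ⁅a, b⁆ c = B a ⁅b, c⁆)
    (hnondeg : ∀ a : E, (∀ b : E, B a b = 0) → a = 0)
    (K : LieIdeal F E)
    (hK : ⁅(⊤ : LieIdeal F E), K⁆ = K) :
    ∀ z ∈ K, ((∀ k ∈ K, B z k = 0) ↔ (∀ k ∈ K, ⁅z, k⁆ = 0)) := by
  intro z _
  exact ⟨fun h _ hk => lie_eq_zero_of_forall_form_eq_zero B hinv hnondeg h hk,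
    fun h _ hk => form_eq_zero_of_mem_lie_top B hsymm hinv h (hK.symm ▸ hk)⟩

/-- Let `E` be a Lie algebra with an invariant nondegenerate symmetric bilinear form,
and `K` an ideal of `E` with `K = [E,K]`. Then the radical of the restricted form on `K`
equals the centre of `K`: `{z ∈ K : (z|K) = 0} = Z(K)`. -/
theorem radical_restricted_form_eq_center (F : Type*) [Field F] [CharZero F]
    (E : Type*) [LieRing E] [LieAlgebra F E]
    (B : E →ₗ[F] E →ₗ[F] F)
    (hsymm : ∀ a b : E, B a b = B b a)
    (hinv : ∀ a b c : E, B ⁅a, b⁆ c = B a ⁅b, c⁆)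
    (hnondeg : ∀ a : E, (∀ b : E, B a b = 0) → a = 0)
    (K : LieIdeal F E)
    (hK : ⁅(⊤ : LieIdeal F E), K⁆ = K) :
    ∀ z ∈ K, ((∀ k ∈ K, B z k = 0) ↔ (∀ k ∈ K, ⁅z, k⁆ = 0)) :=
  radical_restricted_form_eq_center_general F E B hsymm hinv hnondeg K hK
end

section
/- The centre of the Lie algebra sl_N(A) over a unital associative algebra A is {z·E_N : z ∈ Z(A) ∩ [A,A]}, where E_N is the identity matrix, Z(A) is the centre of the associative algebra A, and [A,A] is the span of commutators. -/
/-!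
An element `x` of the centre of `sl_N(A)` commutes with every off-diagonal `a • E_ij`, which
forces `x = z • 1` with `z` central. The trace maps `sl_N(A)` into `[A, A]` and
`tr (z • 1) = N • z`, so dividing by `N` (characteristic zero) puts `z` in `[A, A]`.
Conversely `(a * b - b * a) • 1 = ⁅a • 1, b • 1⁆`, and scalar matrices over `Z(A)` are central.
-/

open Matrix

/-- `[A, A]`; for `A = Matrix n n B` this is `sl_n(B)`. -/
def commutatorSpan (R A : Type*) [CommSemiring R] [Ring A] [Module R A] : Submodule R A :=
  Submodule.span R {c : A | ∃ a b : A, c = a * b - b * a}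

section commutatorSpan

variable {R A : Type*} [CommSemiring R] [Ring A] [Module R A]

theorem mul_sub_mul_mem_commutatorSpan (a b : A) : a * b - b * a ∈ commutatorSpan R A :=
  Submodule.subset_span ⟨a, b, rfl⟩

theorem commutatorSpan_eq_span_lie :
    commutatorSpan R A = Submodule.span R {m : A | ∃ y z : A, m = ⁅y, z⁆} := by
  simp only [commutatorSpan, Ring.lie_def]

variable {n : Type*} [Fintype n]

theorem Matrix.single_mem_commutatorSpan [DecidableEq n] {i j : n} (hij : i ≠ j) (a : A) :
    single i j a ∈ commutatorSpan R (Matrix n n A) := by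
  have : single i j a * single j j 1 - single j j 1 * single i j a = single i j a := by
    rw [single_mul_single_same, single_mul_single_of_ne (h := hij.symm), mul_one, sub_zero]
  exact this ▸ mul_sub_mul_mem_commutatorSpan _ _

theorem Matrix.trace_mul_sub_mul_mem_commutatorSpan (y w : Matrix n n A) :
    trace (y * w - w * y) ∈ commutatorSpan R A := by
  have : trace (y * w - w * y) = ∑ i, ∑ j, (y i j * w j i - w j i * y i j) := by
    rw [trace_sub]
    simp only [trace, diag, mul_apply, Finset.sum_sub_distrib]
    rw [Finset.sum_comm (f := fun i j => w j i * y i j)]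
  rw [this]
  exact Submodule.sum_mem _ fun i _ => Submodule.sum_mem _ fun j _ =>
    mul_sub_mul_mem_commutatorSpan _ _

theorem Matrix.trace_mem_commutatorSpan [DecidableEq n] {m : Matrix n n A}
    (hm : m ∈ commutatorSpan R (Matrix n n A)) : trace m ∈ commutatorSpan R A := by
  induction hm using Submodule.span_induction with
  | mem m hm =>
    obtain ⟨y, w, rfl⟩ := hm
    exact trace_mul_sub_mul_mem_commutatorSpan y w
  | zero => simp
  | add m₁ m₂ _ _ h₁ h₂ => rw [trace_add]; exact Submodule.add_mem _ h₁ h₂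
  | smul r m _ h => rw [trace_smul]; exact Submodule.smul_mem _ _ h

end commutatorSpan

section scalar

variable {R A : Type*} [CommSemiring R] [Ring A] [Algebra R A]
variable {n : Type*} [Fintype n] [DecidableEq n]

theorem Matrix.smul_one_mem_commutatorSpan {z : A} (hz : z ∈ commutatorSpan R A) :
    z • (1 : Matrix n n A) ∈ commutatorSpan R (Matrix n n A) := by
  induction hz using Submodule.span_induction with
  | mem c hc =>
    obtain ⟨a, b, rfl⟩ := hc
    have : (a * b - b * a) • (1 : Matrix n n A) = a • 1 * b • 1 - b • 1 * a • 1 := by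
      simp only [smul_mul, one_mul, smul_smul, sub_smul]
    exact this ▸ mul_sub_mul_mem_commutatorSpan _ _
  | zero => rw [zero_smul]; exact Submodule.zero_mem _
  | add c d _ _ h₁ h₂ => rw [add_smul]; exact Submodule.add_mem _ h₁ h₂
  | smul r c _ h => rw [smul_assoc]; exact Submodule.smul_mem _ _ h

end scalar

/-- Unlike `Matrix.mem_range_scalar_of_commute_single`, all entries `a` are needed here:
commuting with `single i j 1` alone does not make the scalar central. -/
theorem Matrix.exists_mem_center_eq_smul_one_of_commute_single {n α : Type*} [Fintype n]
    [DecidableEq n] [Nontrivial n] [Ring α] {M : Matrix n n α}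
    (hM : ∀ i j (a : α), i ≠ j → Commute (single i j a) M) :
    ∃ z ∈ Set.center α, M = z • (1 : Matrix n n α) := by
  obtain ⟨z, rfl⟩ := mem_range_scalar_of_commute_single fun i j hij => hM i j 1 hij
  obtain ⟨i, j, hij⟩ := exists_pair_ne n
  refine ⟨z, Semigroup.mem_center_iff.mpr fun a => ?_, by rw [scalar_apply, smul_one_eq_diagonal]⟩
  simpa [scalar_apply] using congr_fun₂ (hM i j a hij) i j

theorem Matrix.smul_one_mem_commutatorSpan_iff {F A : Type*} [Field F] [CharZero F] [Ring A]
    [Algebra F A] {n : Type*} [Fintype n] [DecidableEq n] [Nonempty n] {z : A} :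
    z • (1 : Matrix n n A) ∈ commutatorSpan F (Matrix n n A) ↔ z ∈ commutatorSpan F A := by
  refine ⟨fun h => ?_, smul_one_mem_commutatorSpan⟩
  have hcard : (Fintype.card n : F) ≠ 0 := Nat.cast_ne_zero.mpr Fintype.card_ne_zero
  have htrace : trace (z • (1 : Matrix n n A)) = (Fintype.card n : F) • z := by
    rw [trace_smul, trace_one, smul_eq_mul, ← (Nat.cast_commute _ z).eq, ← nsmul_eq_mul,
      Nat.cast_smul_eq_nsmul]
  have := Submodule.smul_mem _ (Fintype.card n : F)⁻¹ (htrace ▸ trace_mem_commutatorSpan h)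
  rwa [inv_smul_smul₀ hcard] at this

/-- The centre of `sl_N(A)` is `{z·E_N : z ∈ Z(A) ∩ [A,A]}`. -/
theorem center_slN (F : Type*) [Field F] [CharZero F]
    (A : Type*) [Ring A] [Algebra F A] (N : ℕ) (hN : 2 ≤ N) :
    ∀ slN : Submodule F (Matrix (Fin N) (Fin N) A),
      slN = Submodule.span F
          {m : Matrix (Fin N) (Fin N) A |
            ∃ y z : Matrix (Fin N) (Fin N) A, m = ⁅y, z⁆} →
      ∀ x : Matrix (Fin N) (Fin N) A,
        (x ∈ slN ∧ ∀ y ∈ slN, ⁅x, y⁆ = 0) ↔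
        (∃ z : A, (∀ a : A, z * a = a * z) ∧
          z ∈ Submodule.span F {c : A | ∃ a b : A, c = a * b - b * a} ∧
          x = z • (1 : Matrix (Fin N) (Fin N) A)) := by
  rintro _ rfl x
  have : Nontrivial (Fin N) := Fin.nontrivial_iff_two_le.mpr hN
  rw [← commutatorSpan_eq_span_lie]
  constructor
  · rintro ⟨hx, hcentral⟩
    obtain ⟨z, hz, rfl⟩ := exists_mem_center_eq_smul_one_of_commute_single fun i j a hij =>
      (commute_iff_lie_eq.mpr (hcentral _ (single_mem_commutatorSpan hij a))).symm
    exact ⟨z, fun a => (Semigroup.mem_center_iff.mp hz a).symm,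
      smul_one_mem_commutatorSpan_iff.mp hx, rfl⟩
  · rintro ⟨z, hz, hzspan, rfl⟩
    refine ⟨smul_one_mem_commutatorSpan hzspan, fun y _ => commute_iff_lie_eq.mp ?_⟩
    simpa [scalar_apply, smul_one_eq_diagonal] using scalar_commute z hz y
end

section
/- Let g be a finite-dimensional central simple Lie algebra over F and A a unital commutative associative F-algebra. Then the map F ⊗ A → Cent_F(g ⊗ A) sending s ⊗ a to the linear map u ⊗ b ↦ su ⊗ ab is an isomorphism of F-algebras; in particular every centroidal transformation of g ⊗ A is of the form u ⊗ b ↦ u ⊗ ab for a unique a ∈ A. -/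
/-!
For a centroidal `χ` on `A ⊗ g`, `b ∈ A` and a functional `l` on `A`, the map
`u ↦ (l ⊗ id) (χ (b ⊗ u))` is centroidal on `g`, because `b ⊗ [x, y] = [1 ⊗ x, b ⊗ y]`; by
centrality of `g` it is a scalar. As functionals separate points of `A`, this forces
`χ (b ⊗ u) = c_b ⊗ u` for some `c_b ∈ A`. Non-abelianness of `g` then gives `c_b = c_1 b`:
evaluate `χ` on `b ⊗ [u, v] = [b ⊗ u, 1 ⊗ v]` with `[u, v] ≠ 0`.
-/

open TensorProduct

namespace TensorProduct

variable {F A V : Type*} [Field F] [AddCommGroup A] [Module F A] [AddCommGroup V] [Module F V]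

lemma eq_zero_of_forall_lid_rTensor_eq_zero {z : A ⊗[F] V}
    (h : ∀ l : Module.Dual F A, TensorProduct.lid F V (l.rTensor V z) = 0) : z = 0 := by
  classical
  let b := Module.Basis.ofVectorSpace F A
  refine (equivFinsuppOfBasisLeft b).map_eq_zero_iff.mp (Finsupp.ext fun i => ?_)
  rw [equivFinsuppOfBasisLeft_apply, h, Finsupp.coe_zero, Pi.zero_apply]

lemma tmul_left_injective {w : V} (hw : w ≠ 0) :
    Function.Injective (· ⊗ₜ[F] w : A → A ⊗[F] V) := fun a a' h => by
  obtain ⟨μ, hμ⟩ := Module.Projective.exists_dual_eq_one F hw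
  simpa [hμ] using congrArg (fun z => TensorProduct.rid F A (μ.lTensor A z)) h

lemma apply_rid_lTensor (l : Module.Dual F A) (μ : Module.Dual F V) (z : A ⊗[F] V) :
    l (TensorProduct.rid F A (μ.lTensor A z)) = μ (TensorProduct.lid F V (l.rTensor V z)) := by
  induction z using TensorProduct.induction_on with
  | zero => simp
  | tmul a v => simp [mul_comm]
  | add x y hx hy => simp only [map_add, hx, hy]

lemma exists_forall_eq_tmul_of_forall_dual (f : V →ₗ[F] A ⊗[F] V)
    (hf : ∀ l : Module.Dual F A, ∃ s : F, ∀ v, TensorProduct.lid F V (l.rTensor V (f v)) = s • v) :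
    ∃ c : A, ∀ v, f v = c ⊗ₜ v := by
  obtain hV | ⟨w, hw⟩ := forall_or_exists_not (fun w : V => w = 0)
  · exact ⟨0, fun v => by rw [hV v, map_zero, tmul_zero]⟩
  obtain ⟨μ, hμ⟩ := Module.Projective.exists_dual_eq_one F hw
  refine ⟨TensorProduct.rid F A (μ.lTensor A (f w)), fun v => sub_eq_zero.mp ?_⟩
  refine eq_zero_of_forall_lid_rTensor_eq_zero fun l => ?_
  obtain ⟨s, hs⟩ := hf l
  have hl : l (TensorProduct.rid F A (μ.lTensor A (f w))) = s := by
    rw [apply_rid_lTensor, hs, map_smul, hμ, smul_eq_mul, mul_one]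
  simp [hs, hl]

end TensorProduct

def LinearMap.IsCentroidal {R L : Type*} [CommRing R] [LieRing L] [LieAlgebra R L]
    (χ : L →ₗ[R] L) : Prop :=
  ∀ x y : L, χ ⁅x, y⁆ = ⁅x, χ y⁆

section ExtendScalars

open LieAlgebra.ExtendScalars

variable {R A L : Type*} [CommRing R] [CommRing A] [Algebra R A] [LieRing L] [LieAlgebra R L]

lemma isCentroidal_rTensor_mulLeft (a : A) :
    ((LinearMap.mulLeft R a).rTensor L).IsCentroidal := by
  intro x y
  induction x using TensorProduct.induction_on with
  | zero => simp
  | add x₁ x₂ h₁ h₂ => simp only [add_lie, map_add, h₁, h₂]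
  | tmul b u =>
    induction y using TensorProduct.induction_on with
    | zero => simp
    | add y₁ y₂ h₁ h₂ => simp only [lie_add, map_add, h₁, h₂]
    | tmul c v => simp only [bracket_tmul, LinearMap.rTensor_tmul, LinearMap.mulLeft_apply,
        mul_left_comm]

lemma lid_rTensor_one_tmul_lie (l : A →ₗ[R] R) (u : L) (z : A ⊗[R] L) :
    TensorProduct.lid R L (l.rTensor L ⁅(1 : A) ⊗ₜ[R] u, z⁆) =
      ⁅u, TensorProduct.lid R L (l.rTensor L z)⁆ := by
  induction z using TensorProduct.induction_on with
  | zero => simp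
  | tmul a v => simp [bracket_tmul]
  | add x y hx hy => simp only [lie_add, map_add, hx, hy]

end ExtendScalars

namespace LinearMap.IsCentroidal

open LieAlgebra.ExtendScalars

variable {F A L : Type*} [Field F] [CommRing A] [Algebra F A] [LieRing L] [LieAlgebra F L]

lemma exists_forall_eq_tmul
    (hL : ∀ ψ : L →ₗ[F] L, ψ.IsCentroidal → ∃ s : F, ψ = s • LinearMap.id)
    {χ : A ⊗[F] L →ₗ[F] A ⊗[F] L} (hχ : χ.IsCentroidal) (b : A) :
    ∃ c : A, ∀ u, χ (b ⊗ₜ u) = c ⊗ₜ u := by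
  refine exists_forall_eq_tmul_of_forall_dual (χ ∘ₗ TensorProduct.mk F A L b) fun l => ?_
  let ψ := (TensorProduct.lid F L).toLinearMap ∘ₗ l.rTensor L ∘ₗ χ ∘ₗ TensorProduct.mk F A L b
  have hψ : ψ.IsCentroidal := fun x y => by
    have : b ⊗ₜ[F] ⁅x, y⁆ = ⁅(1 : A) ⊗ₜ[F] x, b ⊗ₜ[F] y⁆ := by rw [bracket_tmul, one_mul]
    simp only [ψ, LinearMap.comp_apply, LinearEquiv.coe_coe, TensorProduct.mk_apply]
    rw [this, hχ, lid_rTensor_one_tmul_lie]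
  obtain ⟨s, hs⟩ := hL ψ hψ
  exact ⟨s, fun v => LinearMap.congr_fun hs v⟩

lemma exists_forall_eq_mul_tmul
    (hL : ∀ ψ : L →ₗ[F] L, ψ.IsCentroidal → ∃ s : F, ψ = s • LinearMap.id)
    {u₀ v₀ : L} (huv : ⁅u₀, v₀⁆ ≠ 0)
    {χ : A ⊗[F] L →ₗ[F] A ⊗[F] L} (hχ : χ.IsCentroidal) :
    ∃ a : A, ∀ b u, χ (b ⊗ₜ u) = (a * b) ⊗ₜ u := by
  choose c hc using hχ.exists_forall_eq_tmul hL
  refine ⟨c 1, fun b u => ?_⟩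
  suffices c b = c 1 * b by rw [hc, this]
  apply tmul_left_injective (F := F) huv
  calc c b ⊗ₜ ⁅u₀, v₀⁆ = χ ⁅b ⊗ₜ u₀, (1 : A) ⊗ₜ[F] v₀⁆ := by rw [← hc, bracket_tmul, mul_one]
    _ = (c 1 * b) ⊗ₜ ⁅u₀, v₀⁆ := by rw [hχ, hc, bracket_tmul, mul_comm]

end LinearMap.IsCentroidal

theorem centroid_of_tensor_general (F : Type*) [Field F]
    (g : Type*) [LieRing g] [LieAlgebra F g]
    [LieAlgebra.IsSimple F g]
    (hcentral : ∀ χ : g →ₗ[F] g, (∀ a b : g, χ ⁅a, b⁆ = ⁅a, χ b⁆) →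
      ∃ s : F, χ = s • LinearMap.id)
    (A : Type*) [CommRing A] [Algebra F A] :
    -- each multiplication map `b ⊗ u ↦ (a b) ⊗ u` is a centroidal transformation
    (∀ a : A, ∀ x y : A ⊗[F] g,
      (LinearMap.rTensor g (LinearMap.mulLeft F a)) ⁅x, y⁆ =
        ⁅x, (LinearMap.rTensor g (LinearMap.mulLeft F a)) y⁆) ∧
    -- `a ↦ χ_a` is multiplicative
    (∀ a₁ a₂ : A,
      LinearMap.rTensor (N := A) g (LinearMap.mulLeft F (a₁ * a₂)) =
        (LinearMap.rTensor g (LinearMap.mulLeft F a₁)) ∘ₗ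
          (LinearMap.rTensor g (LinearMap.mulLeft F a₂))) ∧
    -- every centroidal transformation is `b ⊗ u ↦ (a b) ⊗ u` for a unique `a`
    (∀ χ : A ⊗[F] g →ₗ[F] A ⊗[F] g,
      (∀ x y : A ⊗[F] g, χ ⁅x, y⁆ = ⁅x, χ y⁆) →
      ∃! a : A, ∀ (b : A) (u : g), χ (b ⊗ₜ[F] u) = (a * b) ⊗ₜ[F] u) := by
  obtain ⟨u, v, huv⟩ : ∃ u v : g, ⁅u, v⁆ ≠ 0 := by
    by_contra! h
    exact LieAlgebra.IsSimple.non_abelian (R := F) (L := g) ⟨h⟩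
  refine ⟨isCentroidal_rTensor_mulLeft, fun a₁ a₂ => ?_, fun χ hχ => ?_⟩
  · rw [LinearMap.mulLeft_mul, LinearMap.rTensor_comp]
  obtain ⟨a, ha⟩ := LinearMap.IsCentroidal.exists_forall_eq_mul_tmul hcentral huv hχ
  refine ⟨a, ha, fun a' ha' => tmul_left_injective (F := F) huv ?_⟩
  simpa using (ha' 1 ⁅u, v⁆).symm.trans (ha 1 ⁅u, v⁆)

/-- For a finite-dimensional central simple Lie algebra `g` over `F` and a unital
commutative associative `F`-algebra `A`, the centroid of `g ⊗ A` (realized as `A ⊗ g`)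
consists exactly of the maps `u ⊗ b ↦ u ⊗ ab`, each occurring for a unique `a ∈ A`;
and `a ↦ χ_a` is an algebra homomorphism. -/
theorem centroid_of_tensor (F : Type*) [Field F] [CharZero F]
    (g : Type*) [LieRing g] [LieAlgebra F g] [FiniteDimensional F g]
    [LieAlgebra.IsSimple F g]
    (hcentral : ∀ χ : g →ₗ[F] g, (∀ a b : g, χ ⁅a, b⁆ = ⁅a, χ b⁆) →
      ∃ s : F, χ = s • LinearMap.id)
    (A : Type*) [CommRing A] [Algebra F A] :
    -- each multiplication map `b ⊗ u ↦ (a b) ⊗ u` is a centroidal transformation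
    (∀ a : A, ∀ x y : A ⊗[F] g,
      (LinearMap.rTensor g (LinearMap.mulLeft F a)) ⁅x, y⁆ =
        ⁅x, (LinearMap.rTensor g (LinearMap.mulLeft F a)) y⁆) ∧
    -- `a ↦ χ_a` is multiplicative
    (∀ a₁ a₂ : A,
      LinearMap.rTensor (N := A) g (LinearMap.mulLeft F (a₁ * a₂)) =
        (LinearMap.rTensor g (LinearMap.mulLeft F a₁)) ∘ₗ
          (LinearMap.rTensor g (LinearMap.mulLeft F a₂))) ∧
    -- every centroidal transformation is `b ⊗ u ↦ (a b) ⊗ u` for a unique `a`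
    (∀ χ : A ⊗[F] g →ₗ[F] A ⊗[F] g,
      (∀ x y : A ⊗[F] g, χ ⁅x, y⁆ = ⁅x, χ y⁆) →
      ∃! a : A, ∀ (b : A) (u : g), χ (b ⊗ₜ[F] u) = (a * b) ⊗ₜ[F] u) :=
  centroid_of_tensor_general F g hcentral A
end
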